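/- Let X be a proper metric space and let φ : X → ℝ/ℤ be a Higson function. Set V₁ = [1/4, 1] + ℤ and V₂ = [3/4, 3/2] + ℤ (arcs in ℝ/ℤ). Then U₁ = φ^{−1}(V₁) and U₂ = φ^{−1}(V₂) form a coarse cover of X, and on each U_i the map φ lifts to a Higson function φ_i : U_i → ℝ with π ∘ φ_i = φ|_{U_i}, where π : ℝ → ℝ/ℤ is the projection (take φ_i(x) to be the representative of φ(x) in [1/4,1] resp. [3/4,3/2]). -/
import Mathlib


/-- A map into a (pseudo)metric space is Higson if it is bounded and far out has
arbitrarily small variation over entourages. -/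
def HigsonMap {Z M : Type*} [MetricSpace Z] [PseudoMetricSpace M] (ψ : Z → M) : Prop :=
  Bornology.IsBounded (Set.range ψ) ∧
  ∀ R : ℝ, 0 ≤ R → ∀ ε : ℝ, 0 < ε → ∃ K : Set Z, Bornology.IsBounded K ∧
    ∀ x y : Z, dist x y ≤ R → ¬(x ∈ K ∧ y ∈ K) → dist (ψ x) (ψ y) < ε

section Aux

lemma circDist (a b : ℝ) :
    dist ((a : AddCircle (1:ℝ))) (b : AddCircle (1:ℝ)) = |a - b - round (a - b)| := by
  rw [dist_eq_norm, ← AddCircle.coe_sub, AddCircle.norm_eq]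
  norm_num

/-- If two reals differ by at most 3/4 and their circle distance is < ε ≤ 1/8,
then their real distance is < ε. -/
lemma realDist_lt (a b ε : ℝ) (hab : |a - b| ≤ 3/4) (hε : ε ≤ 1/8)
    (h : dist ((a : AddCircle (1:ℝ))) (b : AddCircle (1:ℝ)) < ε) : |a - b| < ε := by
  rw [circDist] at h
  set t := a - b with ht
  have hr : round t = 0 := by
    have h1 : |(round t : ℝ)| < 1 := by
      calc |(round t : ℝ)| ≤ |t - round t| + |t| := by
            have := abs_sub_abs_le_abs_sub (round t : ℝ) t
            have := abs_sub_comm (round t : ℝ) t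
            nlinarith [abs_sub (round t : ℝ) t, abs_abs t]
        _ < 1 := by linarith
    have h2 : |round t| < 1 := by exact_mod_cast h1
    exact Int.abs_lt_one_iff.mp h2
  rw [hr] at h; simpa using h

/-- Points in (0,1/4) and (1/2,3/4) are more than 1/4 apart on the circle. -/
lemma circDist_far (a b : ℝ) (ha : a ∈ Set.Ioo (0:ℝ) (1/4)) (hb : b ∈ Set.Ioo (1/2:ℝ) (3/4)) :
    1/4 < dist ((a : AddCircle (1:ℝ))) (b : AddCircle (1:ℝ)) := by
  rw [circDist]
  obtain ⟨ha1, ha2⟩ := ha; obtain ⟨hb1, hb2⟩ := hb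
  set t := a - b with ht
  have h1 : -3/4 < t := by simp [ht]; linarith
  have h2 : t < -1/4 := by simp [ht]; linarith
  rcases le_or_gt (round t) (-1) with h | h
  · have : (round t : ℝ) ≤ -1 := by exact_mod_cast h
    rw [abs_sub_comm, abs_of_nonpos (by linarith)]
    linarith
  · have : (0:ℝ) ≤ (round t : ℝ) := by
      have : 0 ≤ round t := by omega
      exact_mod_cast this
    rw [abs_of_nonpos (by linarith)]
    linarith

/-- Every point of the circle not in the image of `Icc c d` (with `d - c ≥ 3/4`, period fits)
has a representative; specialized forms below. -/
lemma exists_rep (q : AddCircle (1:ℝ)) : ∃ a : ℝ, a ∈ Set.Ico (0:ℝ) 1 ∧ (a : AddCircle (1:ℝ)) = q := by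
  refine ⟨((AddCircle.equivIco 1 0 q) : ℝ), by simpa using (AddCircle.equivIco 1 0 q).2,
    (AddCircle.equivIco 1 0).symm_apply_apply q⟩

lemma equivIco_coe_eq (c r : ℝ) (hr : r ∈ Set.Ico c (c+1)) :
    ((AddCircle.equivIco 1 c (r : AddCircle (1:ℝ))) : ℝ) = r := by
  have h1 : QuotientAddGroup.equivIcoMod (by norm_num : (0:ℝ) < 1) c ↑r
      = ⟨toIcoMod (by norm_num : (0:ℝ)<1) c r, toIcoMod_mem_Ico _ c _⟩ :=
    QuotientAddGroup.equivIcoMod_coe _ c r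
  have h2 := (toIcoMod_eq_self (by norm_num : (0:ℝ)<1) (a := c) (b := r)).mpr hr
  simp [AddCircle.equivIco, h1, h2]

/-- The generic lifting lemma. -/
lemma lift_higson {X : Type*} [MetricSpace X] (φ : X → AddCircle (1:ℝ)) (hφ : HigsonMap φ)
    (c d : ℝ) (hcd : c ≤ d) (hlen : d ≤ c + 3/4) :
    ∃ ψ : (φ ⁻¹' ((fun r : ℝ => (r : AddCircle (1:ℝ))) '' Set.Icc c d)) → ℝ,
      HigsonMap ψ ∧ ∀ x, ((ψ x : ℝ) : AddCircle (1:ℝ)) = φ x.1 ∧ ψ x ∈ Set.Icc c d := by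
  set U := φ ⁻¹' ((fun r : ℝ => (r : AddCircle (1:ℝ))) '' Set.Icc c d) with hU
  refine ⟨fun x => ((AddCircle.equivIco 1 c (φ x.1)) : ℝ), ?_, ?_⟩
  swap
  · intro x
    obtain ⟨r, hr, hrq⟩ := x.2
    have hrIco : r ∈ Set.Ico c (c+1) := ⟨hr.1, by linarith [hr.2]⟩
    have : ((AddCircle.equivIco 1 c (φ x.1)) : ℝ) = r := by
      rw [← hrq]; exact equivIco_coe_eq c r hrIco
    refine ⟨(AddCircle.equivIco 1 c).symm_apply_apply _, ?_⟩
    show ((AddCircle.equivIco 1 c (φ x.1)) : ℝ) ∈ Set.Icc c d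
    rw [this]; exact hr
  · constructor
    · -- bounded range
      refine (Metric.isBounded_Icc c (c+1)).subset ?_
      rintro _ ⟨x, rfl⟩
      exact Set.Ico_subset_Icc_self (AddCircle.equivIco 1 c (φ x.1)).2
    · intro R hR ε hε
      obtain ⟨K, hKb, hK⟩ := hφ.2 R hR (min ε (1/8)) (lt_min hε (by norm_num))
      refine ⟨Subtype.val ⁻¹' K, ?_, ?_⟩
      · obtain ⟨C, hC⟩ := Metric.isBounded_iff.mp hKb
        refine Metric.isBounded_iff.mpr ⟨C, fun x hx y hy => ?_⟩
        rw [Subtype.dist_eq]; exact hC hx hy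
      · intro x y hxy hk
        have hd : dist (φ x.1) (φ y.1) < min ε (1/8) := by
          refine hK x.1 y.1 (by rwa [Subtype.dist_eq] at hxy) ?_
          simpa using hk
        have hx' := x.2; have hy' := y.2
        obtain ⟨rx, hrx, hrxq⟩ := hx'
        obtain ⟨ry, hry, hryq⟩ := hy'
        have hex : ((AddCircle.equivIco 1 c (φ x.1)) : ℝ) = rx := by
          rw [← hrxq]; exact equivIco_coe_eq c rx ⟨hrx.1, by linarith [hrx.2]⟩
        have hey : ((AddCircle.equivIco 1 c (φ y.1)) : ℝ) = ry := by
          rw [← hryq]; exact equivIco_coe_eq c ry ⟨hry.1, by linarith [hry.2]⟩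
        show dist ((AddCircle.equivIco 1 c (φ x.1)) : ℝ) ((AddCircle.equivIco 1 c (φ y.1)) : ℝ) < ε
        rw [hex, hey, Real.dist_eq]
        have hdist : dist ((rx : AddCircle (1:ℝ))) ((ry : AddCircle (1:ℝ))) < min ε (1/8) := by
          rw [show ((rx : AddCircle (1:ℝ))) = φ x.1 from hrxq,
            show ((ry : AddCircle (1:ℝ))) = φ y.1 from hryq]
          exact hd
        have := realDist_lt rx ry (min ε (1/8))
          (by rw [abs_sub_le_iff]; constructor <;> [linarith [hrx.1, hrx.2, hry.1, hry.2]; linarith [hrx.1, hrx.2, hry.1, hry.2]])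
          (min_le_right _ _) hdist
        exact lt_of_lt_of_le this (min_le_left _ _)

end Aux

noncomputable def arc1 : Set (AddCircle (1:ℝ)) :=
  (fun r : ℝ => (r : AddCircle (1:ℝ))) '' Set.Icc (1/4) 1

noncomputable def arc2 : Set (AddCircle (1:ℝ)) :=
  (fun r : ℝ => (r : AddCircle (1:ℝ))) '' Set.Icc (3/4) (3/2)

lemma notMem_arc1 {q : AddCircle (1:ℝ)} (h : q ∉ arc1) :
    ∃ a : ℝ, a ∈ Set.Ioo (0:ℝ) (1/4) ∧ (a : AddCircle (1:ℝ)) = q := by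
  obtain ⟨a, ⟨ha0, ha1⟩, rfl⟩ := exists_rep q
  refine ⟨a, ⟨?_, ?_⟩, rfl⟩
  · rcases lt_or_eq_of_le ha0 with h' | h'
    · exact h'
    · exfalso; apply h
      refine ⟨1, by norm_num, ?_⟩
      show ((1:ℝ) : AddCircle (1:ℝ)) = ↑a
      rw [← h', AddCircle.coe_period]
      exact_mod_cast rfl
  · by_contra h'
    exact h ⟨a, ⟨le_of_not_gt h', le_of_lt ha1⟩, rfl⟩

lemma notMem_arc2 {q : AddCircle (1:ℝ)} (h : q ∉ arc2) :
    ∃ a : ℝ, a ∈ Set.Ioo (1/2:ℝ) (3/4) ∧ (a : AddCircle (1:ℝ)) = q := by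
  obtain ⟨a, ⟨ha0, ha1⟩, rfl⟩ := exists_rep q
  refine ⟨a, ⟨?_, ?_⟩, rfl⟩
  · by_contra h'
    push_neg at h'
    refine h ⟨a + 1, ⟨by linarith, by linarith⟩, ?_⟩
    exact AddCircle.coe_add_period 1 a
  · by_contra h'
    exact h ⟨a, ⟨le_of_not_gt h', by linarith⟩, rfl⟩

/-- For a Higson function `φ : X → ℝ/ℤ`, the preimages `U₁ = φ⁻¹([1/4,1]+ℤ)` and
`U₂ = φ⁻¹([3/4,3/2]+ℤ)` form a coarse cover of `X`, and on each `U_i` the map `φ` lifts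
to a Higson function to `ℝ` with values the representatives in `[1/4,1]` resp. `[3/4,3/2]`. -/
theorem stmt12 {X : Type*} [MetricSpace X] [ProperSpace X]
    (φ : X → AddCircle (1:ℝ)) (hφ : HigsonMap φ) :
    (∀ R : ℝ, 0 ≤ R → Bornology.IsBounded
      ({x : X | ∃ y ∈ (φ ⁻¹' arc1)ᶜ, dist x y ≤ R} ∩
       {x : X | ∃ y ∈ (φ ⁻¹' arc2)ᶜ, dist x y ≤ R})) ∧
    (∃ φ₁ : (φ ⁻¹' arc1) → ℝ, HigsonMap φ₁ ∧
      ∀ x : (φ ⁻¹' arc1), ((φ₁ x : ℝ) : AddCircle (1:ℝ)) = φ x.1 ∧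
        φ₁ x ∈ Set.Icc (1/4 : ℝ) 1) ∧
    (∃ φ₂ : (φ ⁻¹' arc2) → ℝ, HigsonMap φ₂ ∧
      ∀ x : (φ ⁻¹' arc2), ((φ₂ x : ℝ) : AddCircle (1:ℝ)) = φ x.1 ∧
        φ₂ x ∈ Set.Icc (3/4 : ℝ) (3/2)) := by
  refine ⟨?_, ?_, ?_⟩
  · intro R hR
    obtain ⟨K, hKb, hK⟩ := hφ.2 R hR (1/8) (by norm_num)
    refine hKb.subset fun x hx => ?_
    obtain ⟨⟨y₁, hy₁, hdy₁⟩, ⟨y₂, hy₂, hdy₂⟩⟩ := hx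
    by_contra hxK
    have h1 : dist (φ x) (φ y₁) < 1/8 := hK x y₁ hdy₁ (fun h => hxK h.1)
    have h2 : dist (φ x) (φ y₂) < 1/8 := hK x y₂ hdy₂ (fun h => hxK h.1)
    obtain ⟨a, ha, hae⟩ := notMem_arc1 hy₁
    obtain ⟨b, hb, hbe⟩ := notMem_arc2 hy₂
    have hfar := circDist_far a b ha hb
    rw [hae, hbe] at hfar
    have : dist (φ y₁) (φ y₂) ≤ dist (φ x) (φ y₁) + dist (φ x) (φ y₂) :=
      dist_triangle_left _ _ _
    linarith
  · exact lift_higson φ hφ (1/4) 1 (by norm_num) (by norm_num)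
  · exact lift_higson φ hφ (3/4) (3/2) (by norm_num) (by norm_num)
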